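/- arXiv:1403.1898 — 2 statements merged into one kernel-verified Lean document; each statement's English description precedes it below -/
import Mathlib

section
/- Assume A is generated as a nonunital F-subalgebra by two primitive axes a and b of Jordan type η. Set σ = a·b − η • a − η • b, φ = φ_b(a) and π = (1−η)φ − η. Then A = F • a + F • b + F • σ (so A has dimension at most 3 over F), and the multiplication is given by: a·a = a, b·b = b, a·b = η • a + η • b + σ, a·σ = π • a, b·σ = π • b, σ·σ = π • σ. -/
/-- The `lam`-eigenspace of the left-multiplication operator by `x`. -/
def eigSp (F : Type*) {A : Type*} [Field F] [NonUnitalNonAssocCommRing A] [Module F A]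
    [SMulCommClass F A A] (x : A) (lam : F) : Submodule F A where
  carrier := {y | x * y = lam • y}
  add_mem' := by
    intro y z hy hz
    simp only [Set.mem_setOf_eq] at *
    rw [mul_add, hy, hz, smul_add]
  zero_mem' := by simp
  smul_mem' := by
    intro c y hy
    simp only [Set.mem_setOf_eq] at *
    rw [mul_smul_comm, hy, smul_smul, smul_smul, mul_comm]

variable {F A : Type*} [Field F] [NonUnitalNonAssocCommRing A] [Module F A]
  [SMulCommClass F A A] [IsScalarTower F A A]

/-- `a` is a primitive axis of Jordan type `η`:  it is an idempotent, `A` is the internal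
direct sum of the `1`-, `0`- and `η`-eigenspaces of `ad_a` with `A_1(a) = F • a` (expressed
as unique decomposition `x = φ • a + α + γ`), `A_0(a)` is a subalgebra, and the
`ℤ/2`-grading fusion rules hold for `A₊(a) = A_1(a) + A_0(a)`, `A₋(a) = A_η(a)`. -/
structure IsPrimitiveAxis (η : F) (a : A) : Prop where
  idem : a * a = a
  prim : eigSp F a (1 : F) = Submodule.span F {a}
  decomp : ∀ x : A, ∃! t : F × A × A,
    t.2.1 ∈ eigSp F a (0 : F) ∧ t.2.2 ∈ eigSp F a η ∧ x = t.1 • a + t.2.1 + t.2.2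
  zz : ∀ y ∈ eigSp F a (0 : F), ∀ z ∈ eigSp F a (0 : F), y * z ∈ eigSp F a (0 : F)
  pp : ∀ y ∈ eigSp F a (1 : F) ⊔ eigSp F a (0 : F),
       ∀ z ∈ eigSp F a (1 : F) ⊔ eigSp F a (0 : F),
         y * z ∈ eigSp F a (1 : F) ⊔ eigSp F a (0 : F)
  pm : ∀ y ∈ eigSp F a (1 : F) ⊔ eigSp F a (0 : F), ∀ z ∈ eigSp F a η, y * z ∈ eigSp F a η
  mm : ∀ y ∈ eigSp F a η, ∀ z ∈ eigSp F a η,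
         y * z ∈ eigSp F a (1 : F) ⊔ eigSp F a (0 : F)

/-- `τ` is the Miyamoto map of the axis `a`:  the `F`-linear map which is the identity on
`A_1(a) ⊔ A_0(a)` and `-1` on `A_η(a)`. -/
def IsMiyamotoMap (η : F) (a : A) (τ : A →ₗ[F] A) : Prop :=
  (∀ y ∈ eigSp F a (1 : F) ⊔ eigSp F a (0 : F), τ y = y) ∧
  (∀ y ∈ eigSp F a η, τ y = -y)

theorem mem_eigSp {x y : A} {lam : F} : y ∈ eigSp F x lam ↔ x * y = lam • y := Iff.rfl

theorem key_lemma (h2 : (2:F) ≠ 0) (η : F) (a b : A)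
    (ha2 : a * a = a) (hb : IsPrimitiveAxis η b)
    (φ : F) (α γ : A) (hα : α ∈ eigSp F b 0) (hγ : γ ∈ eigSp F b η)
    (hd : a = φ • b + α + γ) :
    a * b = φ • b + η • γ ∧
    a * b - η • a - η • b = ((1-η)*φ - η) • b - η • α ∧
    b * (a * b - η • a - η • b) = ((1-η)*φ - η) • b ∧
    a * (a * b - η • a - η • b) =
      (((1-η)*φ - η)*φ) • b + (-η) • (α*α)
        + (((1-η)*φ - η)*η - η*((1 - 2*φ*η)/2)) • γ ∧
    α * α ∈ eigSp F b 0 := by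
  have hbb := hb.idem
  have hbα : b * α = 0 := by rw [mem_eigSp.mp hα, zero_smul]
  have hbγ : b * γ = η • γ := mem_eigSp.mp hγ
  have hαb : α * b = 0 := by rw [mul_comm]; exact hbα
  have hγb : γ * b = η • γ := by rw [mul_comm]; exact hbγ
  have hγα : γ * α = α * γ := mul_comm _ _
  have C1 : a * b = φ • b + η • γ := by
    conv_lhs => rw [hd]
    simp only [add_mul, smul_mul_assoc, hbb, hαb, hγb, add_zero]
  -- a² = a expansion
  have heq : a = (φ*φ) • b + (2*φ*η) • γ + (α*α) + (2:F) • (α*γ) + (γ*γ) := by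
    calc a = a * a := ha2.symm
    _ = (φ • b + α + γ) * (φ • b + α + γ) := by rw [← hd]
    _ = (φ*φ) • b + (2*φ*η) • γ + (α*α) + (2:F) • (α*γ) + (γ*γ) := by
        simp only [add_mul, mul_add, smul_mul_assoc, mul_smul_comm, hbb, hbα, hbγ, hαb, hγb,
          hγα, smul_zero, add_zero, zero_add, smul_smul]
        module
  obtain ⟨y, hy, u, hu, hyu⟩ := Submodule.mem_sup.mp (hb.mm γ hγ γ hγ)
  rw [hb.prim, Submodule.mem_span_singleton] at hy
  obtain ⟨lam, rfl⟩ := hy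
  obtain ⟨t, -, huniq⟩ := hb.decomp a
  have e1 : ((φ, α, γ) : F × A × A) = t := huniq _ ⟨hα, hγ, hd⟩
  have e2 : ((φ*φ + lam, (α*α + u, (2*φ*η) • γ + (2:F) • (α*γ))) : F × A × A) = t := by
    refine huniq _ ⟨add_mem (hb.zz α hα α hα) hu,
      add_mem (Submodule.smul_mem _ _ hγ)
        (Submodule.smul_mem _ _ (hb.pm α (Submodule.mem_sup_right hα) γ hγ)), ?_⟩
    rw [heq, ← hyu]
    module
  have e12 := e1.trans e2.symm
  have h3 : γ = (2*φ*η) • γ + (2:F) • (α*γ) := congrArg (fun t => t.2.2) e12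
  have hαγ : α * γ = ((1 - 2*φ*η)/2) • γ := by
    apply smul_right_injective A h2
    show (2:F) • (α*γ) = (2:F) • (((1 - 2*φ*η)/2) • γ)
    have h4 : (2:F) • (((1 - 2*φ*η)/2) • γ) = (1 - 2*φ*η) • γ := by
      rw [smul_smul]
      congr 1
      field_simp
    rw [h4]
    calc (2:F) • (α*γ) = ((2*φ*η) • γ + (2:F) • (α*γ)) - (2*φ*η) • γ := by module
    _ = γ - (2*φ*η) • γ := by rw [← h3]
    _ = (1 - 2*φ*η) • γ := by module
  have C2 : a * b - η • a - η • b = ((1-η)*φ - η) • b - η • α := by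
    rw [C1, hd]; module
  have C3 : b * (a * b - η • a - η • b) = ((1-η)*φ - η) • b := by
    rw [C2]
    simp only [mul_sub, mul_smul_comm, hbb, hbα, smul_zero]
    module
  have haα : a * α = α*α + ((1 - 2*φ*η)/2) • γ := by
    conv_lhs => rw [hd]
    simp only [add_mul, smul_mul_assoc, hbα, hγα, hαγ, smul_zero]
    module
  have C4 : a * (a * b - η • a - η • b) =
      (((1-η)*φ - η)*φ) • b + (-η) • (α*α)
        + (((1-η)*φ - η)*η - η*((1 - 2*φ*η)/2)) • γ := by
    rw [C2]
    simp only [mul_sub, mul_smul_comm, C1, haα]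
    module
  exact ⟨C1, C2, C3, C4, hb.zz α hα α hα⟩


/-- the 2-generated algebra is spanned by `a`, `b`, `σ` with the indicated
multiplication table, where `φ = φ_b(a)` and `π = (1−η)φ − η`. -/
theorem two_generated_mult_table
    (h2 : (2 : F) ≠ 0) (η : F) (hη0 : η ≠ 0) (hη1 : η ≠ 1)
    (a b : A) (ha : IsPrimitiveAxis η a) (hb : IsPrimitiveAxis η b)
    (hgen : NonUnitalAlgebra.adjoin F ({a, b} : Set A) = ⊤)
    (σ : A) (hσ : σ = a * b - η • a - η • b) :
    ∀ (φ : F) (α γ : A), α ∈ eigSp F b (0 : F) → γ ∈ eigSp F b η →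
      a = φ • b + α + γ →
      Submodule.span F ({a, b, σ} : Set A) = ⊤ ∧
      a * a = a ∧ b * b = b ∧
      a * b = η • a + η • b + σ ∧
      a * σ = ((1 - η) * φ - η) • a ∧
      b * σ = ((1 - η) * φ - η) • b ∧
      σ * σ = ((1 - η) * φ - η) • σ := by
  intro φ α γ hα hγ hd
  obtain ⟨⟨ψ, α', γ'⟩, ⟨hα', hγ', hd'⟩, -⟩ := ha.decomp b
  obtain ⟨K1a, K1b, K1c, K1d, K1e⟩ := key_lemma h2 η a b ha.idem hb φ α γ hα hγ hd
  obtain ⟨K2a, K2b, K2c, K2d, K2e⟩ := key_lemma h2 η b a hb.idem ha ψ α' γ' hα' hγ' hd'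
  have hs : b * a - η • b - η • a = a * b - η • a - η • b := by
    rw [mul_comm]; module
  rw [hs] at K2b K2c K2d
  rw [← hσ] at K1b K1c K1d K2b K2c K2d
  -- K1c : b * σ = π • b ;  K2c : a * σ = π' • a
  set π := (1-η)*φ - η with hπ
  set π' := (1-η)*ψ - η with hπ'
  -- extraction w.r.t. b on a*σ
  obtain ⟨t, -, hu⟩ := hb.decomp (a * σ)
  have e1 : ((π*φ, ((-η) • (α*α), (π*η - η*((1 - 2*φ*η)/2)) • γ)) : F × A × A) = t :=
    hu _ ⟨Submodule.smul_mem _ _ K1e, Submodule.smul_mem _ _ hγ, K1d⟩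
  have e2 : ((π'*φ, (π' • α, π' • γ)) : F × A × A) = t := by
    refine hu _ ⟨Submodule.smul_mem _ _ hα, Submodule.smul_mem _ _ hγ, ?_⟩
    rw [K2c, hd]; module
  have e12 := e1.trans e2.symm
  have hfst : π*φ = π'*φ := congrArg Prod.fst e12
  have hsnd : (-η) • (α*α) = π' • α := congrArg (fun t => t.2.1) e12
  -- extraction w.r.t. a on b*σ
  obtain ⟨t2, -, hu2⟩ := ha.decomp (b * σ)
  have f1 : ((π'*ψ, ((-η) • (α'*α'), (π'*η - η*((1 - 2*ψ*η)/2)) • γ')) : F × A × A) = t2 :=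
    hu2 _ ⟨Submodule.smul_mem _ _ K2e, Submodule.smul_mem _ _ hγ', K2d⟩
  have f2 : ((π*ψ, (π • α', π • γ')) : F × A × A) = t2 := by
    refine hu2 _ ⟨Submodule.smul_mem _ _ hα', Submodule.smul_mem _ _ hγ', ?_⟩
    rw [K1c, hd']; module
  have hfst2 : π'*ψ = π*ψ := congrArg Prod.fst (f1.trans f2.symm)
  have hpi : π = π' := by
    by_cases hφ : φ = 0
    · by_cases hψ : ψ = 0
      · rw [hπ, hπ', hφ, hψ]
      · exact (mul_right_cancel₀ hψ hfst2).symm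
    · exact mul_right_cancel₀ hφ hfst
  have hbα : b * α = 0 := by rw [mem_eigSp.mp hα, zero_smul]
  have hαb : α * b = 0 := by rw [mul_comm]; exact hbα
  have haσ : a * σ = π • a := by rw [K2c, hpi]
  have hbσ : b * σ = π • b := K1c
  have hab : a * b = η • a + η • b + σ := by rw [hσ]; module
  have hσσ : σ * σ = π • σ := by
    calc σ * σ = (π • b - η • α) * (π • b - η • α) := by rw [K1b]
    _ = (π*π) • b + (η*η) • (α*α) := by
        simp only [sub_mul, mul_sub, smul_mul_assoc, mul_smul_comm, hb.idem, hbα, hαb,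
          smul_zero, smul_smul]
        module
    _ = (π*π) • b + (-η) • ((-η) • (α*α)) := by rw [smul_smul]; ring_nf
    _ = π • σ := by rw [hsnd, K1b, hpi]; module
  refine ⟨?_, ha.idem, hb.idem, hab, haσ, hbσ, hσσ⟩
  -- span
  have hmul : ∀ x ∈ Submodule.span F ({a, b, σ} : Set A),
      ∀ y ∈ Submodule.span F ({a, b, σ} : Set A),
      x * y ∈ Submodule.span F ({a, b, σ} : Set A) := by
    intro x hx y hy
    set M := Submodule.span F ({a, b, σ} : Set A) with hM
    have haM : a ∈ M := Submodule.subset_span (by simp)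
    have hbM : b ∈ M := Submodule.subset_span (by simp)
    have hσM : σ ∈ M := Submodule.subset_span (by simp)
    induction hx, hy using Submodule.span_induction₂ with
    | mem_mem u v hu hv =>
      rcases hu with rfl | rfl | rfl <;> rcases hv with rfl | rfl | rfl
      · rw [ha.idem]; exact haM
      · rw [hab]; exact add_mem (add_mem (Submodule.smul_mem _ _ haM) (Submodule.smul_mem _ _ hbM)) hσM
      · rw [haσ]; exact Submodule.smul_mem _ _ haM
      · rw [mul_comm, hab]; exact add_mem (add_mem (Submodule.smul_mem _ _ haM) (Submodule.smul_mem _ _ hbM)) hσM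
      · rw [hb.idem]; exact hbM
      · rw [hbσ]; exact Submodule.smul_mem _ _ hbM
      · rw [mul_comm, haσ]; exact Submodule.smul_mem _ _ haM
      · rw [mul_comm, hbσ]; exact Submodule.smul_mem _ _ hbM
      · rw [hσσ]; exact Submodule.smul_mem _ _ hσM
    | zero_left v hv => rw [zero_mul]; exact zero_mem _
    | zero_right u hu => rw [mul_zero]; exact zero_mem _
    | add_left u v w hu hv hw h1 h2 => rw [add_mul]; exact add_mem h1 h2
    | add_right u v w hu hv hw h1 h2 => rw [mul_add]; exact add_mem h1 h2
    | smul_left c u v hu hv h1 => rw [smul_mul_assoc]; exact Submodule.smul_mem _ _ h1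
    | smul_right c u v hu hv h1 => rw [mul_smul_comm]; exact Submodule.smul_mem _ _ h1
  set S : NonUnitalSubalgebra F A :=
    (Submodule.span F ({a, b, σ} : Set A)).toNonUnitalSubalgebra (fun x y hx hy => hmul x hx y hy)
  have hle : NonUnitalAlgebra.adjoin F ({a, b} : Set A) ≤ S := by
    apply NonUnitalAlgebra.adjoin_le
    intro x hx
    rcases hx with rfl | rfl
    · exact Submodule.subset_span (by simp)
    · exact Submodule.subset_span (by simp)
  rw [eq_top_iff]
  intro x _
  have hx : x ∈ NonUnitalAlgebra.adjoin F ({a, b} : Set A) := by rw [hgen]; trivial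
  exact hle hx
end

section
/- Assume η ≠ 1/2, and let A be generated as a nonunital F-subalgebra by a set X of primitive axes of Jordan type η that is closed under the Miyamoto maps (τ(x)(y) ∈ X for all x, y ∈ X). If a, b ∈ X satisfy τ(a) = τ(b) and τ(a) ≠ id, then a = b. -/
variable {F A : Type*} [Field F] [NonUnitalNonAssocCommRing A] [Module F A]
  [SMulCommClass F A A] [IsScalarTower F A A]

/-!
Since `τ(a) = τ(b)` fixes `b`, the element `b` has no `η`-part with respect to `a`:
`b = φ a + α` with `α ∈ A_0(a)`, and idempotency of `b` forces `φ ∈ {0, 1}`, so `ab ∈ {a, 0}`;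
symmetrically `ab ∈ {b, 0}`. Hence `a = b` unless `ab = 0` (an axis `0` would make `τ` trivial).

If `ab = 0`, some generator `x ∈ X` has a nonzero `η`-part `m` with respect to `a`, and it is also
its `η`-part with respect to `b`: `x = s a + α + m = t b + β + m`. The operator
`ad_x (ad_x - η)` maps `A` into `F x`; applied to `a - b` it yields polynomial relations between
`s`, `t` and `η`. Either `s = t = η`, and then `a - b ∈ A_η(x)` with `(a - b)² = a + b` forces
`η = 1/2`; or `s = t = 0`, and then `a - b ∈ A_0(x)` forces `m = 0`; or, up to symmetry,
`s = 0 ≠ t` and `x = t b + m`, where `x² = x` forces `η = -1` and the fusion rule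
`A_0(x) A_0(x) ⊆ A_0(x)` fails on the explicit `0`-eigenvector `4a - 3b + 2m` of `x`.
-/

set_option linter.unusedSectionVars false

open Submodule

lemma mem_eigSp_iff {x y : A} {l : F} : y ∈ eigSp F x l ↔ x * y = l • y := Iff.rfl

lemma mem_eigSp_one_of_mul_self {a : A} (haa : a * a = a) : a ∈ eigSp F a 1 := by
  rw [mem_eigSp_iff, haa, one_smul]

lemma eigSp_zero_zero : eigSp F (0 : A) 0 = ⊤ := by
  ext y
  simp [mem_eigSp_iff]

lemma sub_mul_self_eq_add_of_mul_eq_zero {a b : A} (haa : a * a = a) (hbb : b * b = b)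
    (hab : a * b = 0) : (a - b) * (a - b) = a + b := by
  rw [mul_sub, sub_mul, sub_mul, haa, hbb, hab, mul_comm b a, hab]
  abel

namespace IsPrimitiveAxis

variable {η : F} {a : A}

lemma eq_of_smul_add_add_eq (ha : IsPrimitiveAxis η a) {s₁ s₂ : F} {α₁ α₂ γ₁ γ₂ : A}
    (hα₁ : α₁ ∈ eigSp F a 0) (hγ₁ : γ₁ ∈ eigSp F a η)
    (hα₂ : α₂ ∈ eigSp F a 0) (hγ₂ : γ₂ ∈ eigSp F a η)
    (h : s₁ • a + α₁ + γ₁ = s₂ • a + α₂ + γ₂) : s₁ = s₂ ∧ α₁ = α₂ ∧ γ₁ = γ₂ := by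
  simpa [Prod.ext_iff] using (ha.decomp _).unique (y₁ := (s₁, α₁, γ₁)) (y₂ := (s₂, α₂, γ₂))
    ⟨hα₁, hγ₁, rfl⟩ ⟨hα₂, hγ₂, h⟩

lemma mul_smul_add_add (ha : IsPrimitiveAxis η a) (s : F) {α γ : A}
    (hα : α ∈ eigSp F a 0) (hγ : γ ∈ eigSp F a η) :
    a * (s • a + α + γ) = s • a + η • γ := by
  rw [mul_add, mul_add, mul_smul_comm, ha.idem, mem_eigSp_iff.mp hα, mem_eigSp_iff.mp hγ,
    zero_smul, add_zero]

lemma exists_of_mem_sup (ha : IsPrimitiveAxis η a) {y : A}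
    (hy : y ∈ eigSp F a 1 ⊔ eigSp F a 0) :
    ∃ (c : F) (y₀ : A), y₀ ∈ eigSp F a 0 ∧ y = c • a + y₀ := by
  obtain ⟨y₁, hy₁, y₀, hy₀, rfl⟩ := mem_sup.mp hy
  rw [ha.prim] at hy₁
  obtain ⟨c, rfl⟩ := mem_span_singleton.mp hy₁
  exact ⟨c, y₀, hy₀, rfl⟩

lemma exists_mul_eq_smul_of_mem_sup (ha : IsPrimitiveAxis η a) {y : A}
    (hy : y ∈ eigSp F a 1 ⊔ eigSp F a 0) : ∃ c : F, a * y = c • a := by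
  obtain ⟨c, y₀, hy₀, rfl⟩ := ha.exists_of_mem_sup hy
  exact ⟨c, by simpa using ha.mul_smul_add_add c hy₀ (zero_mem _)⟩

lemma eq_zero_of_mem_sup_of_mem_eigSp (ha : IsPrimitiveAxis η a) {y : A}
    (hy : y ∈ eigSp F a 1 ⊔ eigSp F a 0) (hy' : y ∈ eigSp F a η) : y = 0 := by
  obtain ⟨c, y₀, hy₀, rfl⟩ := ha.exists_of_mem_sup hy
  have h : (0 : F) • a + 0 + (c • a + y₀) = c • a + y₀ + 0 := by
    rw [zero_smul, zero_add, zero_add, add_zero]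
  exact (ha.eq_of_smul_add_add_eq (zero_mem _) hy' hy₀ (zero_mem _) h).2.2

lemma exists_mul_mul_sub_eq_smul (ha : IsPrimitiveAxis η a) (y : A) :
    ∃ c : F, a * (a * y) - η • (a * y) = c • a := by
  obtain ⟨⟨c, α, γ⟩, ⟨hα, hγ, rfl⟩, -⟩ := ha.decomp y
  refine ⟨(1 - η) * c, ?_⟩
  rw [ha.mul_smul_add_add c hα hγ, mul_add, mul_smul_comm, ha.idem, mul_smul_comm,
    mem_eigSp_iff.mp hγ]
  module

lemma isIdempotentElem_of_mul_self (ha : IsPrimitiveAxis η a) {φ : F} {α : A}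
    (hα : α ∈ eigSp F a 0) (h : (φ • a + α) * (φ • a + α) = φ • a + α) :
    IsIdempotentElem φ := by
  have hαa : α * a = 0 := by rw [mul_comm, mem_eigSp_iff.mp hα, zero_smul]
  have hsq : (φ • a + α) * (φ • a + α) = (φ * φ) • a + α * α + 0 := by
    simp only [mul_add, add_mul, smul_mul_assoc, mul_smul_comm, ha.idem,
      mem_eigSp_iff.mp hα, hαa, zero_smul]
    module
  rw [hsq, ← add_zero (φ • a + α)] at h
  exact (ha.eq_of_smul_add_add_eq (ha.zz α hα α hα) (zero_mem _) hα (zero_mem _) h).1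

lemma adjoin_le_sup (ha : IsPrimitiveAxis η a) {X : Set A}
    (hX : ∀ x ∈ X, x ∈ eigSp F a 1 ⊔ eigSp F a 0) {y : A}
    (hy : y ∈ NonUnitalAlgebra.adjoin F X) : y ∈ eigSp F a 1 ⊔ eigSp F a 0 := by
  induction hy using NonUnitalAlgebra.adjoin_induction with
  | mem x hx => exact hX x hx
  | add x y _ _ hx hy => exact add_mem hx hy
  | zero => exact zero_mem _
  | mul x y _ _ hx hy => exact ha.pp x hx y hy
  | smul c x _ hx => exact smul_mem _ c hx

end IsPrimitiveAxis

namespace IsMiyamotoMap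

variable {η : F} {a : A} {τ : A →ₗ[F] A}

lemma eq_id_of_eq_zero (hτ : IsMiyamotoMap η (0 : A) τ) : τ = LinearMap.id := by
  ext y
  exact hτ.1 y (mem_sup_right (by simp [eigSp_zero_zero]))

lemma apply_self (hτ : IsMiyamotoMap η a τ) (haa : a * a = a) : τ a = a :=
  hτ.1 a (mem_sup_left (mem_eigSp_one_of_mul_self haa))

lemma sub_apply_smul_add_add (hτ : IsMiyamotoMap η a τ) (haa : a * a = a) (s : F) {α γ : A}
    (hα : α ∈ eigSp F a 0) (hγ : γ ∈ eigSp F a η) :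
    s • a + α + γ - τ (s • a + α + γ) = (2 : F) • γ := by
  rw [map_add, map_add, hτ.1 _ (mem_sup_left (smul_mem _ s (mem_eigSp_one_of_mul_self haa))),
    hτ.1 α (mem_sup_right hα), hτ.2 γ hγ]
  module

lemma eta_part_eq {b : A} (hτa : IsMiyamotoMap η a τ) (hτb : IsMiyamotoMap η b τ)
    (haa : a * a = a) (hbb : b * b = b) (h2 : (2 : F) ≠ 0) {s t : F} {α β γ δ : A}
    (hα : α ∈ eigSp F a 0) (hγ : γ ∈ eigSp F a η)
    (hβ : β ∈ eigSp F b 0) (hδ : δ ∈ eigSp F b η)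
    (h : s • a + α + γ = t • b + β + δ) : γ = δ :=
  smul_right_injective A h2 <| show (2 : F) • γ = (2 : F) • δ by
    rw [← hτa.sub_apply_smul_add_add haa s hα hγ, h, hτb.sub_apply_smul_add_add hbb t hβ hδ]

lemma exists_eq_smul_add_of_apply_eq (hτ : IsMiyamotoMap η a τ) (ha : IsPrimitiveAxis η a)
    (h2 : (2 : F) ≠ 0) {y : A} (hy : τ y = y) :
    ∃ (φ : F) (α : A), α ∈ eigSp F a 0 ∧ y = φ • a + α := by
  obtain ⟨⟨φ, α, γ⟩, ⟨hα, hγ, rfl⟩, -⟩ := ha.decomp y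
  have h2γ := hτ.sub_apply_smul_add_add ha.idem φ hα hγ
  rw [hy, sub_self, eq_comm, smul_eq_zero] at h2γ
  exact ⟨φ, α, hα, by rw [h2γ.resolve_left h2, add_zero]⟩

lemma eq_id_of_adjoin_eq_top (hτ : IsMiyamotoMap η a τ) (ha : IsPrimitiveAxis η a) {X : Set A}
    (hgen : NonUnitalAlgebra.adjoin F X = ⊤)
    (hX : ∀ x ∈ X, x ∈ eigSp F a 1 ⊔ eigSp F a 0) :
    τ = LinearMap.id := by
  ext y
  exact hτ.1 y (ha.adjoin_le_sup hX (hgen ▸ trivial))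

end IsMiyamotoMap

lemma two_mul_sub_one_ne_zero {η : F} (h2 : (2 : F) ≠ 0) (hη2 : η ≠ 1 / 2) :
    2 * η - 1 ≠ 0 := by
  intro h
  apply hη2
  rw [eq_div_iff h2]
  linear_combination h

section Orthogonal

variable {η : F} {a b x m α β : A} {s t : F}

lemma IsPrimitiveAxis.mul_eq_zero_of_mul_eq_mul (hx : IsPrimitiveAxis η x) (h2 : (2 : F) ≠ 0)
    (haa : a * a = a) (hbb : b * b = b) (hab : a * b = 0) (h : x * a = x * b) : x * a = 0 := by
  have hsub : a - b ∈ eigSp F x 0 := by rw [mem_eigSp_iff, mul_sub, h, sub_self, zero_smul]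
  have hadd : x * (a + b) = 0 := by
    simpa [mem_eigSp_iff, sub_mul_self_eq_add_of_mul_eq_zero haa hbb hab] using
      hx.zz _ hsub _ hsub
  rw [mul_add, ← h, ← two_smul F] at hadd
  exact (smul_eq_zero.mp hadd).resolve_left h2

lemma IsPrimitiveAxis.exists_mul_add_eq_smul (hx : IsPrimitiveAxis η x) (haa : a * a = a)
    (hbb : b * b = b) (hab : a * b = 0) (h : a - b ∈ eigSp F x η) :
    ∃ μ : F, x * (a + b) = μ • x :=
  hx.exists_mul_eq_smul_of_mem_sup
    (sub_mul_self_eq_add_of_mul_eq_zero haa hbb hab ▸ hx.mm _ h _ h)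

lemma IsPrimitiveAxis.coeff_relations (ha : IsPrimitiveAxis η a) (hx : IsPrimitiveAxis η x)
    (hb : b ∈ eigSp F a 0) (hα : α ∈ eigSp F a 0) (hm : m ∈ eigSp F a η) (hm0 : m ≠ 0)
    (hxa : x = s • a + α + m) (hxb : x * b = t • b + η • m) :
    η * (s - t) * s = s * s - η * s ∧ (η * (s - t)) • α = (η * t - t * t) • b := by
  have hxa' : x * a = s • a + η • m := by rw [mul_comm, hxa, ha.mul_smul_add_add s hα hm]
  have hxab : x * (a - b) = s • a - t • b := by
    rw [mul_sub, hxa', hxb]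
    abel
  obtain ⟨c, hc⟩ := hx.exists_mul_mul_sub_eq_smul (a - b)
  have hdec : (c * s) • a + c • α + c • m
      = (s * s - η * s) • a + (η * t - t * t) • b + (η * (s - t)) • m := by
    rw [hxab, mul_sub, mul_smul_comm, mul_smul_comm, hxa', hxb, hxa] at hc
    linear_combination (norm := module) -hc
  obtain ⟨hcs, hcα, hcm⟩ := ha.eq_of_smul_add_add_eq (smul_mem _ c hα) (smul_mem _ c hm)
    (smul_mem _ _ hb) (smul_mem _ _ hm) hdec
  obtain rfl : c = η * (s - t) := smul_left_injective F hm0 hcm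
  exact ⟨hcs, hcα⟩

lemma IsPrimitiveAxis.eta_part_mul_self (hb : IsPrimitiveAxis η b) (hx : IsPrimitiveAxis η x)
    (hmb : m ∈ eigSp F b η) (hm0 : m ≠ 0) (hxe : x = t • b + m) :
    2 * t * η = 1 ∧ m * m = (t - t * t) • b := by
  have hmm : m * m = (t - t * t) • b + (1 - 2 * t * η) • m := by
    have h := hx.idem
    rw [hxe] at h
    simp only [mul_add, add_mul, smul_mul_assoc, mul_smul_comm, hb.idem, mem_eigSp_iff.mp hmb,
      mul_comm m b] at h
    linear_combination (norm := module) h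
  have hsup : (1 - 2 * t * η) • m ∈ eigSp F b 1 ⊔ eigSp F b 0 := by
    have h := sub_mem (hb.mm m hmb m hmb)
      (mem_sup_left (smul_mem _ (t - t * t) (mem_eigSp_one_of_mul_self hb.idem)))
    rwa [hmm, add_sub_cancel_left] at h
  have h0 := hb.eq_zero_of_mem_sup_of_mem_eigSp hsup (smul_mem _ _ hmb)
  have hc : 1 - 2 * t * η = 0 := (smul_eq_zero.mp h0).resolve_right hm0
  exact ⟨by linear_combination -hc, by rw [hmm, hc, zero_smul, add_zero]⟩

lemma IsPrimitiveAxis.false_of_eta_eq_neg_one (hx : IsPrimitiveAxis (-1 : F) x)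
    (haa : a * a = a) (hbb : b * b = b) (hab : a * b = 0) (ham : a * m = -m) (hbm : b * m = -m)
    (hmm : m * m = (t - t * t) • b) (hxe : x = t • b + m) (ht : 2 * t = -1)
    (h2 : (2 : F) ≠ 0) (h3 : (3 : F) ≠ 0) (hm0 : m ≠ 0) : False := by
  have hba : b * a = 0 := by rw [mul_comm, hab]
  have hma : m * a = -m := by rw [mul_comm, ham]
  have hmb : m * b = -m := by rw [mul_comm, hbm]
  have hxa : x * a = -m := by rw [hxe, add_mul, smul_mul_assoc, hba, smul_zero, zero_add, hma]
  have hxb : x * b = t • b - m := by rw [hxe, add_mul, smul_mul_assoc, hbb, hmb, sub_eq_add_neg]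
  have hxm : x * m = (t - t * t) • b - t • m := by
    rw [hxe, add_mul, smul_mul_assoc, hbm, hmm]
    module
  -- `w` spans the `0`-eigenspace of `x` on `span {a, b, m}`.
  set w : A := (4 : F) • a - (3 : F) • b + (2 : F) • m with hw
  have hxw : w ∈ eigSp F x 0 := by
    rw [mem_eigSp_iff, zero_smul, hw]
    simp only [mul_add, mul_sub, mul_smul_comm, hxa, hxb, hxm]
    linear_combination (norm := module) -(ht • (m + t • b))
  have hww : w * w = (16 : F) • a + (9 + 4 * t - 4 * t * t) • b - (4 : F) • m := by
    simp only [hw, mul_add, add_mul, mul_sub, sub_mul, smul_mul_assoc, mul_smul_comm, haa, hbb,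
      hab, hba, ham, hma, hbm, hmb, hmm]
    module
  have h24 : (24 : F) • m = 0 := by
    have h := mem_eigSp_iff.mp (hx.zz w hxw w hxw)
    rw [zero_smul, hww] at h
    simp only [mul_add, mul_sub, mul_smul_comm, hxa, hxb, hxm] at h
    linear_combination (norm := module) -h + ht • ((2 * t - 1) • m - (t * (2 * t - 5)) • b)
  have h24' : (24 : F) ≠ 0 := by
    rw [show (24 : F) = 2 * 2 * 2 * 3 by norm_num]
    exact mul_ne_zero (mul_ne_zero (mul_ne_zero h2 h2) h2) h3
  exact hm0 ((smul_eq_zero.mp h24).resolve_left h24')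

lemma IsPrimitiveAxis.false_of_eq_smul_add (hb : IsPrimitiveAxis η b) (hx : IsPrimitiveAxis η x)
    (haa : a * a = a) (hab : a * b = 0) (ham : a * m = η • m) (hmb : m ∈ eigSp F b η)
    (hm0 : m ≠ 0) (hxe : x = t • b + m) (ht : t * (1 - η) = η)
    (h2 : (2 : F) ≠ 0) (hη2 : η ≠ 1 / 2) : False := by
  obtain ⟨htη, hmm⟩ := hb.eta_part_mul_self hx hmb hm0 hxe
  have hη : (2 * η - 1) * (η + 1) = 0 := by linear_combination (-2 * η) * ht + (1 - η) * htη
  obtain rfl : η = -1 := by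
    linear_combination (mul_eq_zero.mp hη).resolve_left (two_mul_sub_one_ne_zero h2 hη2)
  have h3 : (3 : F) ≠ 0 := fun h ↦
    two_mul_sub_one_ne_zero h2 hη2 (by linear_combination -h)
  rw [neg_one_smul] at ham
  exact hx.false_of_eta_eq_neg_one haa hb.idem hab ham
    (by rw [mem_eigSp_iff.mp hmb, neg_one_smul]) hmm hxe (by linear_combination -htη) h2 h3 hm0

lemma IsPrimitiveAxis.false_of_left_coeff_eq_zero (ha : IsPrimitiveAxis η a)
    (hb : IsPrimitiveAxis η b) (hx : IsPrimitiveAxis η x) (hab : a * b = 0)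
    (hα : α ∈ eigSp F a 0) (hβ : β ∈ eigSp F b 0) (hma : m ∈ eigSp F a η)
    (hmb : m ∈ eigSp F b η) (hm0 : m ≠ 0)
    (hxa : x = s • a + α + m) (hxb : x = t • b + β + m)
    (h2 : (2 : F) ≠ 0) (hη0 : η ≠ 0) (hη2 : η ≠ 1 / 2) (hs : s = 0) : False := by
  subst hs
  have hxa' : x * a = (0 : F) • a + η • m := by
    rw [mul_comm, hxa, ha.mul_smul_add_add 0 hα hma]
  have hxb' : x * b = t • b + η • m := by rw [mul_comm, hxb, hb.mul_smul_add_add t hβ hmb]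
  have hbA : b ∈ eigSp F a 0 := by rw [mem_eigSp_iff, hab, zero_smul]
  have haB : a ∈ eigSp F b 0 := by rw [mem_eigSp_iff, mul_comm, hab, zero_smul]
  obtain ⟨htt, -⟩ := hb.coeff_relations hx haB hβ hmb hm0 hxb hxa'
  obtain ⟨-, hαb⟩ := ha.coeff_relations hx hbA hα hma hm0 hxa hxb'
  by_cases ht : t = 0
  · subst ht
    have h := hx.mul_eq_zero_of_mul_eq_mul h2 ha.idem hb.idem hab
      (by rw [hxa', hxb', zero_smul, zero_smul])
    rw [hxa', zero_smul, zero_add] at h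
    exact hm0 ((smul_eq_zero.mp h).resolve_left hη0)
  have htη : t * (1 - η) = η := mul_left_cancel₀ ht (by linear_combination -htt)
  have hηt : η * (0 - t) ≠ 0 := mul_ne_zero hη0 (by rwa [zero_sub, neg_ne_zero])
  have hαt : α = t • b := by
    refine smul_right_injective A hηt (?_ : (η * (0 - t)) • α = (η * (0 - t)) • (t • b))
    rw [hαb, smul_smul]
    congr 1
    linear_combination htt
  exact hb.false_of_eq_smul_add hx ha.idem hab (mem_eigSp_iff.mp hma) hmb hm0
    (by rw [hxa, hαt, zero_smul, zero_add]) htη h2 hη2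

lemma IsPrimitiveAxis.false_of_coeffs_ne_zero (ha : IsPrimitiveAxis η a)
    (hb : IsPrimitiveAxis η b) (hx : IsPrimitiveAxis η x) (hab : a * b = 0)
    (hα : α ∈ eigSp F a 0) (hβ : β ∈ eigSp F b 0) (hma : m ∈ eigSp F a η)
    (hmb : m ∈ eigSp F b η) (hm0 : m ≠ 0)
    (hxa : x = s • a + α + m) (hxb : x = t • b + β + m)
    (h2 : (2 : F) ≠ 0) (hη0 : η ≠ 0) (hη2 : η ≠ 1 / 2) (hs : s ≠ 0) (ht : t ≠ 0) :
    False := by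
  have hxa' : x * a = s • a + η • m := by rw [mul_comm, hxa, ha.mul_smul_add_add s hα hma]
  have hxb' : x * b = t • b + η • m := by rw [mul_comm, hxb, hb.mul_smul_add_add t hβ hmb]
  have hbA : b ∈ eigSp F a 0 := by rw [mem_eigSp_iff, hab, zero_smul]
  have haB : a ∈ eigSp F b 0 := by rw [mem_eigSp_iff, mul_comm, hab, zero_smul]
  obtain ⟨hss, -⟩ := ha.coeff_relations hx hbA hα hma hm0 hxa hxb'
  obtain ⟨htt, -⟩ := hb.coeff_relations hx haB hβ hmb hm0 hxb hxa'
  have hs' : s - η = η * (s - t) := mul_left_cancel₀ hs (by linear_combination -hss)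
  have ht' : t - η = η * (t - s) := mul_left_cancel₀ ht (by linear_combination -htt)
  have hst : (s - t) * (2 * η - 1) = 0 := by linear_combination ht' - hs'
  have ht_eq : t = s :=
    (sub_eq_zero.mp ((mul_eq_zero.mp hst).resolve_right (two_mul_sub_one_ne_zero h2 hη2))).symm
  have hs_eq : s = η := by linear_combination hs' - η * ht_eq
  rw [ht_eq, hs_eq] at hxb'
  rw [hs_eq] at hxa hxa'
  have hsub : a - b ∈ eigSp F x η := by
    rw [mem_eigSp_iff, mul_sub, hxa', hxb', smul_sub]
    abel
  obtain ⟨μ, hμ⟩ := hx.exists_mul_add_eq_smul ha.idem hb.idem hab hsub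
  have hdec : (μ * η) • a + μ • α + μ • m = η • a + η • b + (2 * η) • m := by
    rw [mul_add, hxa', hxb', hxa] at hμ
    linear_combination (norm := module) -hμ
  obtain ⟨hμη, -, hμm⟩ := ha.eq_of_smul_add_add_eq (smul_mem _ μ hα) (smul_mem _ μ hma)
    (smul_mem _ η hbA) (smul_mem _ _ hma) hdec
  obtain rfl : μ = 2 * η := smul_left_injective F hm0 hμm
  exact mul_ne_zero hη0 (two_mul_sub_one_ne_zero h2 hη2) (by linear_combination hμη)

lemma IsPrimitiveAxis.false_of_common_eta_part (ha : IsPrimitiveAxis η a)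
    (hb : IsPrimitiveAxis η b) (hx : IsPrimitiveAxis η x) (hab : a * b = 0)
    (hα : α ∈ eigSp F a 0) (hβ : β ∈ eigSp F b 0) (hma : m ∈ eigSp F a η)
    (hmb : m ∈ eigSp F b η) (hm0 : m ≠ 0)
    (hxa : x = s • a + α + m) (hxb : x = t • b + β + m)
    (h2 : (2 : F) ≠ 0) (hη0 : η ≠ 0) (hη2 : η ≠ 1 / 2) : False := by
  by_cases hs : s = 0
  · exact ha.false_of_left_coeff_eq_zero hb hx hab hα hβ hma hmb hm0 hxa hxb h2 hη0 hη2 hs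
  by_cases ht : t = 0
  · exact hb.false_of_left_coeff_eq_zero ha hx (by rw [mul_comm, hab]) hβ hα hmb hma hm0 hxb hxa
      h2 hη0 hη2 ht
  exact ha.false_of_coeffs_ne_zero hb hx hab hα hβ hma hmb hm0 hxa hxb h2 hη0 hη2 hs ht

end Orthogonal

lemma IsPrimitiveAxis.mul_ne_zero_of_isMiyamotoMap {η : F} {X : Set A}
    (haxes : ∀ x ∈ X, IsPrimitiveAxis η x) (hgen : NonUnitalAlgebra.adjoin F X = ⊤) {a b : A}
    (ha : IsPrimitiveAxis η a) (hb : IsPrimitiveAxis η b) {τ : A →ₗ[F] A}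
    (hτa : IsMiyamotoMap η a τ) (hτb : IsMiyamotoMap η b τ) (hτ : τ ≠ LinearMap.id)
    (h2 : (2 : F) ≠ 0) (hη0 : η ≠ 0) (hη2 : η ≠ 1 / 2) : a * b ≠ 0 := by
  intro hab
  obtain ⟨x, hxX, hx⟩ : ∃ x ∈ X, x ∉ eigSp F a 1 ⊔ eigSp F a 0 := by
    by_contra! h
    exact hτ (hτa.eq_id_of_adjoin_eq_top ha hgen h)
  obtain ⟨⟨s, α, m⟩, ⟨hα, hma, hxa⟩, -⟩ := ha.decomp x
  obtain ⟨⟨t, β, m'⟩, ⟨hβ, hmb, hxb⟩, -⟩ := hb.decomp x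
  obtain rfl : m = m' :=
    hτa.eta_part_eq hτb ha.idem hb.idem h2 hα hma hβ hmb (hxa.symm.trans hxb)
  have hm0 : m ≠ 0 := by
    rintro rfl
    rw [hxa, add_zero] at hx
    exact hx (add_mem (mem_sup_left (smul_mem _ s (mem_eigSp_one_of_mul_self ha.idem)))
      (mem_sup_right hα))
  exact ha.false_of_common_eta_part hb (haxes x hxX) hab hα hβ hma hmb hm0 hxa hxb h2 hη0 hη2

lemma IsPrimitiveAxis.mul_eq_self_or_eq_zero {η : F} {a b : A} {τ : A →ₗ[F] A}
    (ha : IsPrimitiveAxis η a) (hbb : b * b = b) (hτ : IsMiyamotoMap η a τ) (hτb : τ b = b)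
    (h2 : (2 : F) ≠ 0) : a * b = a ∨ a * b = 0 := by
  obtain ⟨φ, α, hα, rfl⟩ := hτ.exists_eq_smul_add_of_apply_eq ha h2 hτb
  have hab : a * (φ • a + α) = φ • a := by
    simpa using ha.mul_smul_add_add φ hα (zero_mem _)
  rcases IsIdempotentElem.iff_eq_zero_or_one.mp (ha.isIdempotentElem_of_mul_self hα hbb)
    with rfl | rfl
  · exact Or.inr (by rw [hab, zero_smul])
  · exact Or.inl (by rw [hab, one_smul])

theorem tau_injective_on_axes_general
    (h2 : (2 : F) ≠ 0) (η : F) (hη0 : η ≠ 0) (hη2 : η ≠ 1 / 2)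
    (X : Set A) (haxes : ∀ a ∈ X, IsPrimitiveAxis η a)
    (hgen : NonUnitalAlgebra.adjoin F X = ⊤)
    (a b : A) (haX : a ∈ X) (hbX : b ∈ X)
    (τa τb : A →ₗ[F] A)
    (hτa : IsMiyamotoMap η a τa) (hτb : IsMiyamotoMap η b τb)
    (heq : τa = τb) (hnid : τa ≠ LinearMap.id) :
    a = b := by
  subst heq
  have ha := haxes a haX
  have hb := haxes b hbX
  rcases ha.mul_eq_self_or_eq_zero hb.idem hτa (hτb.apply_self hb.idem) h2 with hab | hab
  · rcases hb.mul_eq_self_or_eq_zero ha.idem hτb (hτa.apply_self ha.idem) h2 with hba | hba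
    · rw [← hab, mul_comm, hba]
    · rw [mul_comm, hab] at hba
      subst hba
      exact absurd hτa.eq_id_of_eq_zero hnid
  · exact absurd hab (ha.mul_ne_zero_of_isMiyamotoMap haxes hgen hb hτa hτb hnid h2 hη0 hη2)

/-- for `η ≠ 1/2` and `A` generated by a Miyamoto-closed set `X` of
primitive axes, two axes of `X` with the same nontrivial Miyamoto map coincide. -/
theorem tau_injective_on_axes
    (h2 : (2 : F) ≠ 0) (η : F) (hη0 : η ≠ 0) (hη1 : η ≠ 1) (hη2 : η ≠ 1 / 2)
    (X : Set A) (haxes : ∀ a ∈ X, IsPrimitiveAxis η a)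
    (hclosed : ∀ b ∈ X, ∀ τ : A →ₗ[F] A, IsMiyamotoMap η b τ → ∀ x ∈ X, τ x ∈ X)
    (hgen : NonUnitalAlgebra.adjoin F X = ⊤)
    (a b : A) (haX : a ∈ X) (hbX : b ∈ X)
    (τa τb : A →ₗ[F] A)
    (hτa : IsMiyamotoMap η a τa) (hτb : IsMiyamotoMap η b τb)
    (heq : τa = τb) (hnid : τa ≠ LinearMap.id) :
    a = b :=
  tau_injective_on_axes_general h2 η hη0 hη2 X haxes hgen a b haX hbX τa τb hτa hτb heq hnid
end
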